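/- Let T be a left continuous t-norm and L = max on [0,∞]. Then for all d.d.f.'s f, g and all x ∈ [0,∞), (max⊗T)(f,g)(x) = T(f(x), g(x)). -/

import Mathlib

open ENNReal Set

/-- A distance distribution function: increasing `f : [0,∞] → [0,1]` with
`f 0 = 0`, `f ∞ = 1`, left continuous on `(0,∞)`. -/
def IsDDF (f : ℝ≥0∞ → ℝ≥0∞) : Prop :=
  Monotone f ∧ (∀ x, f x ≤ 1) ∧ f 0 = 0 ∧ f ⊤ = 1 ∧
    ∀ x : ℝ≥0∞, 0 < x → x < ⊤ → f x = ⨆ y ∈ Set.Iio x, f y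

/-- The largest quasi-inverse `f∨ y = inf {x | f x > y}`. -/
noncomputable def qInv (f : ℝ≥0∞ → ℝ≥0∞) : ℝ≥0∞ → ℝ≥0∞ :=
  fun y => sInf {x | y < f x}

/-- The unit interval `[0,1]` inside `[0,∞]`. -/
def I01 : Set ℝ≥0∞ := Set.Icc 0 1

/-- A left continuous t-norm on `[0,1]`: commutative, associative, increasing in each
place, identity `1`, left continuous in each variable. -/
def IsLeftContTNorm (T : ℝ≥0∞ → ℝ≥0∞ → ℝ≥0∞) : Prop :=
  (∀ p ∈ I01, ∀ q ∈ I01, T p q ∈ I01) ∧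
  (∀ p ∈ I01, ∀ q ∈ I01, T p q = T q p) ∧
  (∀ p ∈ I01, ∀ q ∈ I01, ∀ r ∈ I01, T (T p q) r = T p (T q r)) ∧
  (∀ p ∈ I01, T p 1 = p) ∧
  (∀ q ∈ I01, ∀ p₁ ∈ I01, ∀ p₂ ∈ I01, p₁ ≤ p₂ → T p₁ q ≤ T p₂ q) ∧
  (∀ q ∈ I01, ∀ p ∈ I01, 0 < p → T p q = ⨆ p' ∈ Set.Iio p, T p' q)

/-- A right continuous `L`-operation on `[0,∞]`: commutative, associative, increasing in
each place, identity `0`, right continuous in each variable. -/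
def IsRightContLOp (L : ℝ≥0∞ → ℝ≥0∞ → ℝ≥0∞) : Prop :=
  (∀ x y, L x y = L y x) ∧
  (∀ x y z, L (L x y) z = L x (L y z)) ∧
  (∀ x, L x 0 = x) ∧
  (∀ y x₁ x₂, x₁ ≤ x₂ → L x₁ y ≤ L x₂ y) ∧
  (∀ y x, x < ⊤ → L x y = ⨅ x' ∈ Set.Ioi x, L x' y)

/-- Joint continuity of a t-norm on `[0,1] × [0,1]`. -/
def TNormContinuous (T : ℝ≥0∞ → ℝ≥0∞ → ℝ≥0∞) : Prop :=
  ContinuousOn (fun pq : ℝ≥0∞ × ℝ≥0∞ => T pq.1 pq.2) (I01 ×ˢ I01)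

/-- The tensor-product triangle function:
`(L ⊗ T)(f,g)(x) = sup {T (f r) (g s) | L r s < x}` for `x < ∞`, and `1` at `∞`. -/
noncomputable def tensor (L T : ℝ≥0∞ → ℝ≥0∞ → ℝ≥0∞) (f g : ℝ≥0∞ → ℝ≥0∞) :
    ℝ≥0∞ → ℝ≥0∞ :=
  fun x => if x = ⊤ then 1 else ⨆ r, ⨆ s, ⨆ _ : L r s < x, T (f r) (g s)

/-!
Monotonicity of `T` gives `(max ⊗ T)(f,g)(x) ≤ T(f x, g x)`, since `max r s < x` forces
`r, s < x`. Conversely `f x = sup_{r<x} f r` and `g x = sup_{s<x} g s` by left continuity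
(trivially at `x = 0`), and left continuity of `T` in each place carries these suprema through
`T`, one argument at a time.
-/

theorem mem_I01_iff {p : ℝ≥0∞} : p ∈ I01 ↔ p ≤ 1 :=
  ⟨fun h => h.2, fun h => ⟨zero_le, h⟩⟩

theorem IsDDF.mem_I01 {f : ℝ≥0∞ → ℝ≥0∞} (hf : IsDDF f) (x : ℝ≥0∞) : f x ∈ I01 :=
  mem_I01_iff.2 (hf.2.1 x)

theorem IsDDF.eq_iSup_Iio {f : ℝ≥0∞ → ℝ≥0∞} (hf : IsDDF f) {x : ℝ≥0∞} (hx : x ≠ ⊤) :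
    f x = ⨆ y ∈ Iio x, f y := by
  rcases eq_zero_or_pos x with rfl | hx0
  · simp [hf.2.2.1]
  · exact hf.2.2.2.2 x hx0 hx.lt_top

namespace IsLeftContTNorm

variable {T : ℝ≥0∞ → ℝ≥0∞ → ℝ≥0∞}

theorem comm (hT : IsLeftContTNorm T) {p q : ℝ≥0∞} (hp : p ∈ I01) (hq : q ∈ I01) :
    T p q = T q p :=
  hT.2.1 p hp q hq

theorem mono_left (hT : IsLeftContTNorm T) {p₁ p₂ q : ℝ≥0∞} (hq : q ∈ I01) (hp₂ : p₂ ∈ I01)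
    (h : p₁ ≤ p₂) : T p₁ q ≤ T p₂ q :=
  hT.2.2.2.2.1 q hq p₁ (mem_I01_iff.2 (h.trans hp₂.2)) p₂ hp₂ h

theorem mono_right (hT : IsLeftContTNorm T) {p q₁ q₂ : ℝ≥0∞} (hp : p ∈ I01) (hq₂ : q₂ ∈ I01)
    (h : q₁ ≤ q₂) : T p q₁ ≤ T p q₂ := by
  have hq₁ : q₁ ∈ I01 := mem_I01_iff.2 (h.trans hq₂.2)
  rw [hT.comm hp hq₁, hT.comm hp hq₂]
  exact hT.mono_left hp hq₂ h

theorem mono (hT : IsLeftContTNorm T) {p₁ p₂ q₁ q₂ : ℝ≥0∞} (hp₂ : p₂ ∈ I01) (hq₂ : q₂ ∈ I01)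
    (hp : p₁ ≤ p₂) (hq : q₁ ≤ q₂) : T p₁ q₁ ≤ T p₂ q₂ :=
  (hT.mono_left (mem_I01_iff.2 (hq.trans hq₂.2)) hp₂ hp).trans (hT.mono_right hp₂ hq₂ hq)

theorem zero_left (hT : IsLeftContTNorm T) {q : ℝ≥0∞} (hq : q ∈ I01) : T 0 q = 0 := by
  have h1 : (1 : ℝ≥0∞) ∈ I01 := mem_I01_iff.2 le_rfl
  have h0 : (0 : ℝ≥0∞) ∈ I01 := mem_I01_iff.2 zero_le_one
  refine le_antisymm ?_ zero_le
  calc T 0 q ≤ T 0 1 := hT.mono_right h0 h1 hq.2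
    _ = 0 := hT.2.2.2.1 0 h0

theorem le_iSup_Iio_left (hT : IsLeftContTNorm T) {ι : Type*} [Preorder ι] {f : ι → ℝ≥0∞}
    (hf : ∀ i, f i ∈ I01) {x : ι} (hfx : f x = ⨆ y ∈ Iio x, f y) {q : ℝ≥0∞} (hq : q ∈ I01) :
    T (f x) q ≤ ⨆ y ∈ Iio x, T (f y) q := by
  rcases eq_zero_or_pos (f x) with hzero | hpos
  · rw [hzero, hT.zero_left hq]
    exact zero_le
  rw [hT.2.2.2.2.2 q hq (f x) (hf x) hpos]
  refine iSup₂_le fun p hp => ?_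
  obtain ⟨y, hyx, hpy⟩ : ∃ y ∈ Iio x, p < f y := by
    simpa only [hfx, mem_Iio, lt_iSup_iff, exists_prop] using hp
  exact le_iSup₂_of_le y hyx (hT.mono_left hq (hf y) hpy.le)

theorem le_iSup_Iio_right (hT : IsLeftContTNorm T) {ι : Type*} [Preorder ι] {g : ι → ℝ≥0∞}
    (hg : ∀ i, g i ∈ I01) {x : ι} (hgx : g x = ⨆ y ∈ Iio x, g y) {p : ℝ≥0∞} (hp : p ∈ I01) :
    T p (g x) ≤ ⨆ y ∈ Iio x, T p (g y) := by
  rw [hT.comm hp (hg x)]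
  refine (hT.le_iSup_Iio_left hg hgx hp).trans (iSup₂_mono fun y _ => ?_)
  rw [hT.comm (hg y) hp]

end IsLeftContTNorm

theorem tensor_sup_eq_iSup_Iio (T : ℝ≥0∞ → ℝ≥0∞ → ℝ≥0∞) (f g : ℝ≥0∞ → ℝ≥0∞) {x : ℝ≥0∞}
    (hx : x ≠ ⊤) :
    tensor (fun r s => r ⊔ s) T f g x = ⨆ r ∈ Iio x, ⨆ s ∈ Iio x, T (f r) (g s) := by
  simp only [tensor, if_neg hx, sup_lt_iff, mem_Iio, iSup_and]
  exact iSup_congr fun r => iSup_comm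

theorem tensor_max (T : ℝ≥0∞ → ℝ≥0∞ → ℝ≥0∞) (hT : IsLeftContTNorm T)
    (f g : ℝ≥0∞ → ℝ≥0∞) (hf : IsDDF f) (hg : IsDDF g) :
    ∀ x : ℝ≥0∞, x ≠ ⊤ → tensor (fun r s => r ⊔ s) T f g x = T (f x) (g x) := by
  intro x hx
  rw [tensor_sup_eq_iSup_Iio T f g hx]
  apply le_antisymm
  · exact iSup₂_le fun r hr => iSup₂_le fun s hs =>
      hT.mono (hf.mem_I01 x) (hg.mem_I01 x) (hf.1 (le_of_lt hr)) (hg.1 (le_of_lt hs))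
  · calc T (f x) (g x) ≤ ⨆ r ∈ Iio x, T (f r) (g x) :=
          hT.le_iSup_Iio_left hf.mem_I01 (hf.eq_iSup_Iio hx) (hg.mem_I01 x)
      _ ≤ ⨆ r ∈ Iio x, ⨆ s ∈ Iio x, T (f r) (g s) := iSup₂_mono fun r _ =>
          hT.le_iSup_Iio_right hg.mem_I01 (hg.eq_iSup_Iio hx) (hf.mem_I01 r)
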